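/- In a free product A * B of groups with |A| ≥ 2 and B infinite cyclic generated by b, for any a ∈ A \ {1} the subgroup generated by b and a·b·a⁻¹ is free of rank 2. -/

import Mathlib

/-!
Let `X` (resp. `Y`) be the reduced words whose first letter lies in `B` with positive (resp.
negative) exponent. Then `b` maps the complement of `Y` into `X` and `b⁻¹` the complement of `X`
into `Y`, while `a ≠ 1` sends `X ∪ Y` to words beginning with a letter of `A`, outside `X ∪ Y`.
The ping-pong lemma, played with `X, Y` for `b` and with `a • X, a • Y` for `a b a⁻¹`, shows that
the two elements generate a free group.
-/

open Monoid CoprodI Pointwise Function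

universe u v

namespace FreeGroup

theorem lift_comp_freeGroupCongr {ι κ G : Type*} [Group G] (e : ι ≃ κ) (f : κ → G) :
    (lift f).comp (freeGroupCongr e).toMonoidHom = lift (f ∘ e) := by
  ext; simp

theorem injective_lift_comp_equiv {ι κ G : Type*} [Group G] (e : ι ≃ κ) (f : κ → G) :
    Injective (lift (f ∘ e)) ↔ Injective (lift f) := by
  rw [← lift_comp_freeGroupCongr, MonoidHom.coe_comp]
  exact Injective.of_comp_iff' _ (freeGroupCongr e).bijective

theorem injective_lift_conj_of_ping_pong {G : Type u} {α : Type*} [Group G]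
    [MulAction G α] (g c : G) {X Y : Set α} (hX : X.Nonempty) (hXY : Disjoint X Y)
    (hc : Disjoint (c • (X ∪ Y)) (X ∪ Y)) (hping : g • Yᶜ ⊆ X) (hpong : g⁻¹ • Xᶜ ⊆ Y) :
    Injective (lift ![g, c * g * c⁻¹]) := by
  have hcX : Disjoint (c • X) (X ∪ Y) :=
    hc.mono_left (Set.smul_set_mono Set.subset_union_left)
  have hcY : Disjoint (c • Y) (X ∪ Y) :=
    hc.mono_left (Set.smul_set_mono Set.subset_union_right)
  have hconj (h : G) (s t : Set α) (hst : h • sᶜ ⊆ t) :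
      (c * h * c⁻¹) • (c • s)ᶜ ⊆ c • t := by
    rw [← Set.smul_set_compl, smul_smul, inv_mul_cancel_right, mul_smul]
    exact Set.smul_set_mono hst
  -- `injective_lift_of_ping_pong` wants the index type in the universe of `G`.
  let e : ULift.{u} (Fin 2) ≃ Fin 2 := Equiv.ulift
  have key : Injective (lift (![g, c * g * c⁻¹] ∘ e)) := by
    refine injective_lift_of_ping_pong _ (![X, c • X] ∘ e) (![Y, c • Y] ∘ e)
      ?_ ?_ ?_ ?_ ?_ ?_
    · rintro ⟨i⟩
      fin_cases i
      exacts [hX, hX.smul_set]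
    · rintro ⟨i⟩ ⟨j⟩ hij
      fin_cases i <;> fin_cases j
      exacts [absurd rfl hij, (hcX.mono_right Set.subset_union_left).symm,
        hcX.mono_right Set.subset_union_left, absurd rfl hij]
    · rintro ⟨i⟩ ⟨j⟩ hij
      fin_cases i <;> fin_cases j
      exacts [absurd rfl hij, (hcY.mono_right Set.subset_union_right).symm,
        hcY.mono_right Set.subset_union_right, absurd rfl hij]
    · rintro ⟨i⟩ ⟨j⟩
      fin_cases i <;> fin_cases j
      exacts [hXY, (hcY.mono_right Set.subset_union_left).symm,
        hcX.mono_right Set.subset_union_right, Set.disjoint_smul_set.mpr hXY]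
    · rintro ⟨i⟩
      fin_cases i
      exacts [hping, hconj g Y X hping]
    · rintro ⟨i⟩
      fin_cases i
      · exact hpong
      · show (c * g * c⁻¹)⁻¹ • (c • X)ᶜ ⊆ c • Y
        simpa [mul_assoc] using hconj g⁻¹ X Y hpong
  exact (injective_lift_comp_equiv e _).mp key

end FreeGroup

namespace Monoid.CoprodI.Word

variable {ι : Type*} {M : ι → Type*} [∀ i, Monoid (M i)] [DecidableEq ι]
  [∀ i, DecidableEq (M i)]

theorem fstIdx_eq_of_equivPair_head_ne_one {i : ι} {w : Word M}
    (h : (equivPair i w).head ≠ 1) : w.fstIdx = some i := by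
  by_contra hne
  exact h (by rw [equivPair_eq_of_fstIdx_ne hne])

theorem equivPair_head_smul_of_ne {i j : ι} (hij : i ≠ j) {a : M j} (ha : a ≠ 1) {w : Word M}
    (hw : (equivPair i w).head ≠ 1) : (equivPair i (of a • w)).head = 1 := by
  have hj : w.fstIdx ≠ some j := by simpa [fstIdx_eq_of_equivPair_head_ne_one hw] using hij
  rw [← cons_eq_smul (h1 := hj) (h2 := ha), equivPair_eq_of_fstIdx_ne]
  simpa [fstIdx_cons] using hij.symm

end Monoid.CoprodI.Word

theorem Monoid.CoprodI.injective_lift_conj {ι : Type*} {G : ι → Type*} [∀ i, Group (G i)]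
    {Γ : Type*} [CommGroup Γ] [LinearOrder Γ] [IsOrderedMonoid Γ] {i j : ι} (hij : i ≠ j)
    (e : G i →* Γ) {b : G i} (hb : 1 < e b) {a : G j} (ha : a ≠ 1) :
    Injective (FreeGroup.lift ![of b, of a * of b * (of a)⁻¹] :
      FreeGroup (Fin 2) →* CoprodI G) := by
  classical
  let v : Word G → Γ := fun w => e (Word.equivPair i w).head
  have v_smul (x : G i) (w : Word G) : v (of x • w) = e x * v w := by
    simp [v, Word.equivPair_smul_same]
  refine FreeGroup.injective_lift_conj_of_ping_pong (X := {w | 1 < v w}) (Y := {w | v w < 1})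
    _ _ ⟨of b • Word.empty, ?_⟩ ?_ ?_ ?_ ?_
  · simpa [v_smul, v, Word.equivPair_eq_of_fstIdx_ne, Word.fstIdx] using hb
  · exact Set.disjoint_left.mpr fun w hX hY => lt_asymm hX hY
  · refine Set.disjoint_left.mpr ?_
    rintro _ ⟨w, hw, rfl⟩ haw
    have hw1 : (Word.equivPair i w).head ≠ 1 := by
      rintro h1
      simp [v, h1] at hw
    simp [v, Word.equivPair_head_smul_of_ne hij ha hw1] at haw
  · rintro _ ⟨w, hw, rfl⟩
    simp only [Set.mem_compl_iff, Set.mem_ofPred_eq, not_lt] at hw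
    show 1 < v (of b • w)
    rw [v_smul]
    exact Right.one_lt_mul_of_lt_of_le hb hw
  · rintro _ ⟨w, hw, rfl⟩
    simp only [Set.mem_compl_iff, Set.mem_ofPred_eq, not_lt] at hw
    show v ((of b)⁻¹ • w) < 1
    rw [← map_inv, v_smul, map_inv]
    exact mul_lt_one_of_lt_of_le (Left.inv_lt_one_iff.mpr hb) hw

namespace Monoid.Coprod

-- Reduced words exist only for `CoprodI`, so `Coprod A B` is mapped there; `ULift` puts both
-- factors in one universe.
abbrev summands (A : Type u) (B : Type v) : Bool → Type (max u v) :=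
  fun i => cond i (ULift.{u} B) (ULift.{v} A)

instance instGroupSummands (A : Type u) (B : Type v) [Group A] [Group B] :
    ∀ i, Group (summands A B i)
  | false => ULift.group
  | true => ULift.group

variable {A : Type u} {B : Type v} [Group A] [Group B]

def toCoprodI : Coprod A B →* CoprodI (summands A B) :=
  lift ((of (i := false)).comp MulEquiv.ulift.symm.toMonoidHom)
    ((of (i := true)).comp MulEquiv.ulift.symm.toMonoidHom)

theorem toCoprodI_comp_lift (a : A) (b : B) :
    toCoprodI.comp (FreeGroup.lift ![inr b, inl a * inr b * (inl a)⁻¹]) =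
      FreeGroup.lift ![of (i := true) (ULift.up b), of (i := false) (ULift.up a) *
        of (i := true) (ULift.up b) * (of (i := false) (ULift.up a))⁻¹] := by
  ext i
  fin_cases i <;> rfl

end Monoid.Coprod

theorem stmt11_general {A B : Type*} [Group A] [Group B]
    (b : B) (hb : ∀ x : B, x ∈ Subgroup.zpowers b) (hBinf : Infinite B)
    (a : A) (ha : a ≠ 1) :
    Function.Injective (FreeGroup.lift
      ![(Monoid.Coprod.inr b : Monoid.Coprod A B),
        Monoid.Coprod.inl a * Monoid.Coprod.inr b * (Monoid.Coprod.inl a)⁻¹]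
      : FreeGroup (Fin 2) →* Monoid.Coprod A B) := by
  have hgen : Subgroup.zpowers b = ⊤ := eq_top_iff.mpr fun x _ => hb x
  let e : B →* Multiplicative ℤ := (intEquivOfZPowersEqTop b hgen).symm.toMonoidHom
  have key := CoprodI.injective_lift_conj (G := Coprod.summands A B) (i := true) (j := false)
    (by decide) (e.comp MulEquiv.ulift.toMonoidHom) (b := ULift.up b)
    (by change 1 < e b; simp [e, ← ofAdd_zero]) (a := ULift.up a)
    (fun h => ha (congrArg ULift.down h))
  rw [← Coprod.toCoprodI_comp_lift, MonoidHom.coe_comp] at key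
  exact key.of_comp

/-- In a free product `Monoid.Coprod A B` with `|A| ≥ 2` and `B` infinite cyclic generated by `b`,
for any `a ∈ A \ {1}` the elements `b` and `a b a⁻¹` generate a free group of rank 2. -/
theorem stmt11 {A B : Type*} [Group A] [Nontrivial A] [Group B]
    (b : B) (hb : ∀ x : B, x ∈ Subgroup.zpowers b) (hBinf : Infinite B)
    (a : A) (ha : a ≠ 1) :
    Function.Injective (FreeGroup.lift
      ![(Monoid.Coprod.inr b : Monoid.Coprod A B),
        Monoid.Coprod.inl a * Monoid.Coprod.inr b * (Monoid.Coprod.inl a)⁻¹]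
      : FreeGroup (Fin 2) →* Monoid.Coprod A B) :=
  stmt11_general b hb hBinf a ha
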